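/- arXiv:2604.01135 — 2 statements merged into one kernel-verified Lean document; each statement's English description precedes it below -/
import Mathlib

section
/- Let α > 0 and σ ≥ 0 be real. For every real ω, the equality iω + α = √(2α)·√(iω + σ²) (with principal square roots) holds if and only if ω² = α·(α − 2σ²). In particular, the characteristic function 𝕕(λ; 0, σ) = λ + α − √(2α)·√(λ+σ²) has purely imaginary roots exactly at λ = ±i·√(α(α−2σ²)) when α > 2σ², and has no purely imaginary roots when α ≤ 2σ². -/
/-- Principal complex square root: branch cut along `(-∞,0]`, `Re (csqrt z) ≥ 0`. -/
noncomputable def csqrt (z : ℂ) : ℂ := z ^ (1/2 : ℂ)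

lemma csqrt_sq (z : ℂ) : (csqrt z) ^ 2 = z := by
  have : (1/2 : ℂ) = ((2:ℕ) : ℂ)⁻¹ := by norm_num
  rw [csqrt, this, Complex.cpow_nat_inv_pow _ (by norm_num)]

lemma csqrt_re_nonneg (z : ℂ) : 0 ≤ (csqrt z).re := by
  by_cases h : z = 0
  · simp [csqrt, h, Complex.zero_cpow (by norm_num : (1/2:ℂ) ≠ 0)]
  · rw [csqrt, Complex.cpow_def_of_ne_zero h, Complex.exp_re]
    have him : (Complex.log z * (1/2)).im = z.arg / 2 := by
      simp [Complex.mul_im, Complex.log_im]; ring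
    rw [him]
    have h1 := Complex.neg_pi_lt_arg z
    have h2 := Complex.arg_le_pi z
    have := Real.pi_pos
    exact mul_nonneg (Real.exp_nonneg _)
      (Real.cos_nonneg_of_mem_Icc ⟨by linarith, by linarith⟩)

lemma key (α σ : ℝ) (hα : 0 < α) (ω : ℝ) :
    Complex.I * ω + α = Real.sqrt (2*α) * csqrt (Complex.I * ω + (σ:ℂ)^2)
      ↔ ω^2 = α * (α - 2*σ^2) := by
  set z : ℂ := Complex.I * ω + (σ:ℂ)^2 with hz
  have hs2 : ((Real.sqrt (2*α) : ℂ))^2 = ((2*α : ℝ) : ℂ) := by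
    rw [← Complex.ofReal_pow, Real.sq_sqrt (by linarith)]
  constructor
  · intro h
    have hsq : (Complex.I * ω + α)^2 = ((2*α : ℝ):ℂ) * z := by
      rw [h, mul_pow, hs2, csqrt_sq]
    rw [hz] at hsq
    have hre := congrArg Complex.re hsq
    simp [Complex.mul_re, Complex.add_re, Complex.add_im, Complex.mul_im, pow_two] at hre
    nlinarith [hre]
  · intro h
    have hsq : (Complex.I * ω + α)^2 = (((Real.sqrt (2*α) : ℂ)) * csqrt z)^2 := by
      rw [mul_pow, hs2, csqrt_sq, hz]
      have : (ω:ℂ)^2 = (α:ℂ) * ((α:ℂ) - 2*(σ:ℂ)^2) := by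
        exact_mod_cast congrArg (Complex.ofReal) h
      push_cast
      linear_combination -this + Complex.I_sq * (ω:ℂ)^2
    have hfac : (Complex.I * ω + α - (Real.sqrt (2*α) : ℂ) * csqrt z)
        * (Complex.I * ω + α + (Real.sqrt (2*α) : ℂ) * csqrt z) = 0 := by
      linear_combination hsq
    rcases mul_eq_zero.mp hfac with h1 | h1
    · linear_combination h1
    · exfalso
      have hre := congrArg Complex.re h1
      have h2 : (((Real.sqrt (2*α) : ℂ)) * csqrt z).re = Real.sqrt (2*α) * (csqrt z).re := by
        simp [Complex.mul_re]
      simp [Complex.add_re, h2] at hre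
      nlinarith [hre, mul_nonneg (mul_nonneg (Real.sqrt_nonneg 2) (Real.sqrt_nonneg α))
        (csqrt_re_nonneg z)]

/-- For real `α > 0`, `σ ≥ 0` and every real `ω`:
`iω + α = √(2α)·√(iω + σ²)` iff `ω² = α(α − 2σ²)`. In particular, the characteristic
function `𝕕(λ;0,σ) = λ + α − √(2α)√(λ+σ²)` has purely imaginary roots exactly at
`λ = ±i√(α(α−2σ²))` when `α > 2σ²`, and no purely imaginary roots when `α ≤ 2σ²`. -/
theorem stmt_3 (α σ : ℝ) (hα : 0 < α) (hσ : 0 ≤ σ) :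
    (∀ ω : ℝ,
      (Complex.I * ω + α = Real.sqrt (2*α) * csqrt (Complex.I * ω + (σ:ℂ)^2)
        ↔ ω^2 = α * (α - 2*σ^2))) ∧
    (2*σ^2 < α → ∀ ω : ℝ,
      (Complex.I * ω + α - Real.sqrt (2*α) * csqrt (Complex.I * ω + (σ:ℂ)^2) = 0
        ↔ ω = Real.sqrt (α*(α - 2*σ^2)) ∨ ω = -Real.sqrt (α*(α - 2*σ^2)))) ∧
    (α ≤ 2*σ^2 → ∀ ω : ℝ, ω ≠ 0 →
      Complex.I * ω + α - Real.sqrt (2*α) * csqrt (Complex.I * ω + (σ:ℂ)^2) ≠ 0) := by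
  refine ⟨fun ω => key α σ hα ω, fun hlt ω => ?_, fun hle ω hω => ?_⟩
  · rw [sub_eq_zero, key α σ hα ω]
    have hc : 0 ≤ α * (α - 2*σ^2) := by nlinarith
    conv_lhs => rw [← Real.sq_sqrt hc, sq_eq_sq_iff_eq_or_eq_neg]
  · rw [Ne, sub_eq_zero, key α σ hα ω]
    intro h
    nlinarith [sq_pos_of_ne_zero hω]
end

section
/- Let α > 0 and β, γ ∈ ℝ. With Λ₀ := α, Λ₂ := α(1−√2+(2−√2)i), Λ₁μ := √(iα), Λ₁ω := i·(1 − √(2α)/(2√(iα))), and M := (3/4)γ + β²·(Λ₀⁻¹ + (2Λ₂)⁻¹), one has Im(M·conj(Λ₁μ)) / Im(Λ₁ω·conj(Λ₁μ)) = −( 7β²/(6α) + (3/4)γ ). -/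
open Complex ComplexConjugate

lemma csqrt_sq_of_re_pos {w : ℂ} (hw : 0 < w.re) : csqrt (w ^ 2) = w := by
  rw [csqrt, one_div]
  exact sq_cpow_two_inv hw

lemma csqrt_I_mul_ofReal {α : ℝ} (hα : 0 < α) : csqrt (I * α) = √(α / 2) * (1 + I) := by
  have hsq : I * α = (√(α / 2) * (1 + I) : ℂ) ^ 2 := by
    have : ((√(α / 2) : ℝ) : ℂ) ^ 2 = α / 2 := by
      exact_mod_cast Real.sq_sqrt (by positivity : 0 ≤ α / 2)
    linear_combination (-(2 * I)) * this - ((√(α / 2) : ℝ) : ℂ) ^ 2 * I_sq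
  rw [hsq, csqrt_sq_of_re_pos]
  simpa using Real.sqrt_pos.2 (half_pos hα)

lemma sqrt_two_mul_div_two_csqrt_I_mul {α : ℝ} (hα : 0 < α) :
    (√(2 * α) : ℂ) / (2 * csqrt (I * α)) = (1 - I) / 2 := by
  have hs : √(2 * α) = 2 * √(α / 2) := by
    rw [show 2 * α = 2 ^ 2 * (α / 2) by ring, Real.sqrt_mul (by positivity),
      Real.sqrt_sq zero_le_two]
  have hne : (√(α / 2) : ℂ) ≠ 0 := ofReal_ne_zero.2 (Real.sqrt_pos.2 (half_pos hα)).ne'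
  have h1I : (1 + I : ℂ) ≠ 0 := by
    intro h; simpa using congrArg re h
  rw [csqrt_I_mul_ofReal hα, hs,
    div_eq_div_iff (mul_ne_zero two_ne_zero (mul_ne_zero hne h1I)) two_ne_zero]
  push_cast
  linear_combination (2 * (√(α / 2) : ℂ)) * I_sq

lemma im_mul_conj_ofReal_mul_one_add_I (z : ℂ) (s : ℝ) :
    (z * conj (s * (1 + I))).im = s * (z.im - z.re) := by
  simp [mul_im, mul_re]
  ring

lemma inv_one_sub_sqrt_two_add_two_sub_sqrt_two_mul_I :
    (1 - √2 + (2 - √2) * I : ℂ)⁻¹ = -(1 + √2 + (2 + √2) * I) / 3 := by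
  have ht : ((√2 : ℝ) : ℂ) ^ 2 = 2 := by exact_mod_cast Real.sq_sqrt zero_le_two
  refine inv_eq_of_mul_eq_one_left ?_
  linear_combination (1 + 2 * I + I ^ 2) / 3 * ht - 2 / 3 * I_sq

/-- Explicit evaluation of the quadratic coefficient `ω₂` of the
frequency expansion, without degradation (`σ = 0`, `ω* = α`). -/
theorem stmt_12 (α β γ : ℝ) (hα : 0 < α) :
    let Λ₀ : ℂ := (α : ℂ)
    let Λ₂ : ℂ := (α : ℂ) * (1 - Real.sqrt 2 + (2 - Real.sqrt 2) * Complex.I)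
    let Λ₁μ : ℂ := csqrt (Complex.I * α)
    let Λ₁ω : ℂ := Complex.I * (1 - (Real.sqrt (2*α) : ℂ) / (2 * csqrt (Complex.I * α)))
    let M : ℂ := (3/4 : ℂ) * γ + (β:ℂ)^2 * (Λ₀⁻¹ + (2*Λ₂)⁻¹)
    (M * (starRingEnd ℂ) Λ₁μ).im / (Λ₁ω * (starRingEnd ℂ) Λ₁μ).im
      = -(7*β^2/(6*α) + (3/4) * γ) := by
  intro Λ₀ Λ₂ Λ₁μ Λ₁ω M
  have hΛ₁μ : Λ₁μ = √(α / 2) * (1 + I) := csqrt_I_mul_ofReal hα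
  have hΛ₁ω : Λ₁ω = (-1 + I) / 2 := by
    simp only [Λ₁ω, sqrt_two_mul_div_two_csqrt_I_mul hα]
    linear_combination I_sq / 2
  have hM : M = (3 / 4 * γ + β ^ 2 * (5 - √2) / (6 * α) : ℝ)
      - (β ^ 2 * (2 + √2) / (6 * α) : ℝ) * I := by
    simp only [M, Λ₀, Λ₂, mul_inv, inv_one_sub_sqrt_two_add_two_sub_sqrt_two_mul_I]
    push_cast
    field_simp
    ring
  rw [hΛ₁μ, im_mul_conj_ofReal_mul_one_add_I, im_mul_conj_ofReal_mul_one_add_I, hΛ₁ω, hM]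
  simp only [sub_re, sub_im, add_re, add_im, mul_re, mul_im, ofReal_re, ofReal_im, I_re, I_im,
    div_ofNat_re, div_ofNat_im, neg_re, neg_im, one_re, one_im]
  field_simp
  ring
end
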